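/- Let (J, |·|_J) be a normed ideal in which the finite rank operators R are dense in the J-norm. If τ = (T_1,...,T_n) and τ' = (T_1',...,T_n') are n-tuples of bounded operators with T_j − T_j' ∈ J for all j, then k_J(τ) = k_J(τ'). -/

import Mathlib

open Filter ContinuousLinearMap
open scoped ENNReal

variable {H : Type} [NormedAddCommGroup H] [InnerProductSpace ℂ H] [CompleteSpace H]

/-- A finite rank operator. -/
def FinRank (A : H →L[ℂ] H) : Prop := FiniteDimensional ℂ (LinearMap.range A.toLinearMap)

/-- A normed ideal of compact operators, presented through its (possibly infinite) norm. -/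
structure NormedIdeal (H : Type) [NormedAddCommGroup H] [InnerProductSpace ℂ H]
    [CompleteSpace H] where
  ν : (H →L[ℂ] H) → ℝ≥0∞
  ν_zero : ν 0 = 0
  ν_add : ∀ X Y, ν (X + Y) ≤ ν X + ν Y
  ν_smul : ∀ (c : ℂ) X, ν (c • X) = (‖c‖₊ : ℝ≥0∞) * ν X
  ν_mul : ∀ A X B, ν (A * X * B) ≤ (‖A‖₊ : ℝ≥0∞) * ν X * (‖B‖₊ : ℝ≥0∞)
  compact : ∀ X, ν X ≠ ⊤ → IsCompactOperator X

/-- `max_j |[A, T_j]|_J`. -/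
noncomputable def commSup (J : NormedIdeal H) {n : ℕ} (τ : Fin n → H →L[ℂ] H)
    (A : H →L[ℂ] H) : ℝ≥0∞ :=
  ⨆ j, J.ν (A * τ j - τ j * A)

/-- `A_m ∈ R_1^+`, `A_m ↑ I` strongly. -/
def ApproxUnit (A : ℕ → H →L[ℂ] H) : Prop :=
  (∀ m, FinRank (A m) ∧ 0 ≤ A m ∧ A m ≤ 1) ∧ Monotone A ∧
    ∀ x : H, Tendsto (fun m => A m x) atTop (nhds x)

/-- The quasicentral modulus `k_J(τ)`. -/
noncomputable def qcMod (J : NormedIdeal H) {n : ℕ} (τ : Fin n → H →L[ℂ] H) : ℝ≥0∞ :=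
  sInf {C | ∃ A, ApproxUnit A ∧ Tendsto (fun m => commSup J τ (A m)) atTop (nhds C)}

/-- An orthogonal projection. -/
def IsProj' (P : H →L[ℂ] H) : Prop := IsSelfAdjoint P ∧ P * P = P

/-- The condenser quasicentral modulus `k_J(τ; P, Q)`. -/
noncomputable def qcModCond (J : NormedIdeal H) {n : ℕ} (τ : Fin n → H →L[ℂ] H)
    (P Q : H →L[ℂ] H) : ℝ≥0∞ :=
  sInf {c | ∃ A : H →L[ℂ] H, FinRank A ∧ 0 ≤ A ∧ A ≤ 1 ∧ A * P = P ∧ A * Q = 0 ∧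
    c = commSup J τ A}

/-! If `A_m` is an approximate unit and `X ∈ J`, then `|[A_m, X]|_J → 0`. By density it suffices
to take `X = F` of finite rank. Then `[A_m, F] = (A_m - 1) F - F (A_m - 1)` and `F = P F = F Q`
with `P`, `Q` the orthogonal projections onto the finite-dimensional ranges of `F` and `F*`; on
these the strong convergence `A_m → 1` is norm convergence, so `‖(A_m - 1) P‖ → 0` and
`‖Q (A_m - 1)‖ = ‖(A_m - 1) Q‖ → 0`. Applied to `T_j - T_j'`, this makes `max_j |[A_m, T_j]|_J`
and `max_j |[A_m, T_j']|_J` differ by a null sequence along every approximate unit. -/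

open Topology

theorem ContinuousLinearMap.tendsto_zero_of_tendsto_apply_zero {𝕜 E F ι : Type*}
    [NontriviallyNormedField 𝕜] [CompleteSpace 𝕜] [NormedAddCommGroup E] [NormedSpace 𝕜 E]
    [FiniteDimensional 𝕜 E] [NormedAddCommGroup F] [NormedSpace 𝕜 F] {l : Filter ι}
    {B : ι → E →L[𝕜] F} (hB : ∀ x, Tendsto (fun i => B i x) l (𝓝 0)) :
    Tendsto B l (𝓝 0) := by
  let v := Module.finBasis 𝕜 E
  obtain ⟨C, -, hC⟩ := v.exists_opNorm_le (F := F)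
  have hsum : Tendsto (fun i => C * ∑ k, ‖B i (v k)‖) l (𝓝 0) := by
    simpa using (tendsto_finsetSum _ fun k _ => (hB (v k)).norm).const_mul C
  rw [tendsto_zero_iff_norm_tendsto_zero]
  refine squeeze_zero (fun _ => norm_nonneg _) (fun i => hC (by positivity) fun k => ?_) hsum
  exact Finset.single_le_sum (f := fun k => ‖B i (v k)‖) (fun _ _ => norm_nonneg _)
    (Finset.mem_univ k)

namespace Submodule

variable {𝕜 E : Type*} [RCLike 𝕜] [NormedAddCommGroup E] [InnerProductSpace 𝕜 E]
  (K : Submodule 𝕜 E)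

theorem tendsto_mul_starProjection_zero [FiniteDimensional 𝕜 K] {ι : Type*} {l : Filter ι}
    {B : ι → E →L[𝕜] E} (hB : ∀ x, Tendsto (fun i => B i x) l (𝓝 0)) :
    Tendsto (fun i => B i * K.starProjection) l (𝓝 0) := by
  have hrestrict : Tendsto (fun i => B i ∘L K.subtypeL) l (𝓝 0) :=
    ContinuousLinearMap.tendsto_zero_of_tendsto_apply_zero fun x => hB x
  refine (((compL 𝕜 E K E).flip K.orthogonalProjectionOnto).continuous.tendsto' 0 0
    (map_zero _)).comp hrestrict |>.congr fun i => ?_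
  ext x
  rfl

theorem starProjection_mul_of_range_le [K.HasOrthogonalProjection] {F : E →L[𝕜] E}
    (hF : LinearMap.range F.toLinearMap ≤ K) : K.starProjection * F = F := by
  ext x
  exact K.starProjection_eq_self_iff.2 (hF ⟨x, rfl⟩)

theorem mul_starProjection_of_range_star_le [CompleteSpace E] [K.HasOrthogonalProjection]
    {F : E →L[𝕜] E} (hF : LinearMap.range (star F).toLinearMap ≤ K) :
    F * K.starProjection = F :=
  star_injective <| by
    rw [star_mul, (isSelfAdjoint_starProjection K).star_eq, K.starProjection_mul_of_range_le hF]

end Submodule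

theorem finRank_star {F : H →L[ℂ] H} (hF : FinRank F) : FinRank (star F) := by
  have : FiniteDimensional ℂ (LinearMap.range F.toLinearMap) := hF
  set K := LinearMap.range F.toLinearMap
  have hstar : star F = star F * K.starProjection := by
    conv_lhs => rw [← K.starProjection_mul_of_range_le le_rfl]
    rw [star_mul, (isSelfAdjoint_starProjection K).star_eq]
  unfold FinRank
  rw [hstar, toLinearMap_mul, Module.End.mul_eq_comp, LinearMap.range_comp,
    Submodule.range_starProjection]
  infer_instance

namespace ApproxUnit

variable {A : ℕ → H →L[ℂ] H} (hA : ApproxUnit A)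
include hA

theorem isSelfAdjoint (m : ℕ) : IsSelfAdjoint (A m) :=
  IsSelfAdjoint.of_nonneg (hA.1 m).2.1

theorem nnnorm_le_one (m : ℕ) : ‖A m‖₊ ≤ 1 :=
  (CStarAlgebra.nnnorm_le_nnnorm_of_nonneg_of_le (hA.1 m).2.1 (hA.1 m).2.2).trans
    (by exact_mod_cast norm_id_le)

end ApproxUnit

namespace NormedIdeal

variable (J : NormedIdeal H)

lemma ν_neg (X : H →L[ℂ] H) : J.ν (-X) = J.ν X := by
  rw [← neg_one_smul ℂ X, J.ν_smul]
  simp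

lemma ν_sub_comm (X Y : H →L[ℂ] H) : J.ν (X - Y) = J.ν (Y - X) := by
  rw [← neg_sub, ν_neg]

lemma ν_sub_le (X Y : H →L[ℂ] H) : J.ν (X - Y) ≤ J.ν X + J.ν Y := by
  simpa only [sub_eq_add_neg, ν_neg] using J.ν_add X (-Y)

lemma ν_ne_top_of_sub_ne_top {X F : H →L[ℂ] H} (hX : J.ν X ≠ ⊤) (hXF : J.ν (X - F) ≠ ⊤) :
    J.ν F ≠ ⊤ :=
  ne_top_of_le_ne_top (ENNReal.add_ne_top.2 ⟨hX, hXF⟩) (by simpa using J.ν_sub_le X (X - F))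

lemma ν_mul_left_le (A X : H →L[ℂ] H) : J.ν (A * X) ≤ ‖A‖₊ * J.ν X := by
  have hone : (‖(1 : H →L[ℂ] H)‖₊ : ℝ≥0∞) ≤ 1 := by exact_mod_cast norm_id_le
  simpa using (J.ν_mul A X 1).trans (mul_le_of_le_one_right' hone)

lemma ν_mul_right_le (X B : H →L[ℂ] H) : J.ν (X * B) ≤ J.ν X * ‖B‖₊ := by
  have hone : (‖(1 : H →L[ℂ] H)‖₊ : ℝ≥0∞) ≤ 1 := by exact_mod_cast norm_id_le
  simpa using (J.ν_mul 1 X B).trans (by gcongr; exact mul_le_of_le_one_left' hone)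

section Limits

variable {ι : Type*} {l : Filter ι} {X : H →L[ℂ] H} (hX : J.ν X ≠ ⊤) {B : ι → H →L[ℂ] H}
include hX

theorem tendsto_ν_mul_left (hB : Tendsto B l (𝓝 0)) :
    Tendsto (fun i => J.ν (B i * X)) l (𝓝 0) := by
  have hbound : Tendsto (fun i => (‖B i‖₊ : ℝ≥0∞) * J.ν X) l (𝓝 0) := by
    simpa [enorm_eq_nnnorm] using ENNReal.Tendsto.mul_const hB.enorm (Or.inr hX)
  exact tendsto_of_tendsto_of_tendsto_of_le_of_le tendsto_const_nhds hbound (fun _ => zero_le)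
    fun i => J.ν_mul_left_le _ _

theorem tendsto_ν_mul_right (hB : Tendsto B l (𝓝 0)) :
    Tendsto (fun i => J.ν (X * B i)) l (𝓝 0) := by
  have hbound : Tendsto (fun i => J.ν X * (‖B i‖₊ : ℝ≥0∞)) l (𝓝 0) := by
    simpa [enorm_eq_nnnorm] using ENNReal.Tendsto.const_mul hB.enorm (Or.inr hX)
  exact tendsto_of_tendsto_of_tendsto_of_le_of_le tendsto_const_nhds hbound (fun _ => zero_le)
    fun i => J.ν_mul_right_le _ _

variable (hXr : FinRank X) (hB : ∀ x, Tendsto (fun i => B i x) l (𝓝 0))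
include hXr hB

theorem tendsto_ν_mul_finRank_left : Tendsto (fun i => J.ν (B i * X)) l (𝓝 0) := by
  have : FiniteDimensional ℂ (LinearMap.range X.toLinearMap) := hXr
  have hPX := (LinearMap.range X.toLinearMap).starProjection_mul_of_range_le le_rfl
  simpa only [mul_assoc, hPX] using
    J.tendsto_ν_mul_left hX ((LinearMap.range X.toLinearMap).tendsto_mul_starProjection_zero hB)

theorem tendsto_ν_finRank_mul_right (hBsa : ∀ i, IsSelfAdjoint (B i)) :
    Tendsto (fun i => J.ν (X * B i)) l (𝓝 0) := by
  have : FiniteDimensional ℂ (LinearMap.range (star X).toLinearMap) := finRank_star hXr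
  set Q := (LinearMap.range (star X).toLinearMap).starProjection
  have hXQ : X * Q = X :=
    (LinearMap.range (star X).toLinearMap).mul_starProjection_of_range_star_le le_rfl
  have hQB : Tendsto (fun i => Q * B i) l (𝓝 0) := by
    have hBQ := (LinearMap.range (star X).toLinearMap).tendsto_mul_starProjection_zero hB
    simpa only [star_mul, (isSelfAdjoint_starProjection _).star_eq, (hBsa _).star_eq,
      star_zero] using hBQ.star
  simpa only [← mul_assoc, hXQ] using J.tendsto_ν_mul_right hX hQB

end Limits

theorem ν_commutator_le {A : H →L[ℂ] H} (hA : ‖A‖₊ ≤ 1) (X : H →L[ℂ] H) :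
    J.ν (A * X - X * A) ≤ J.ν X + J.ν X := by
  have hA' : (‖A‖₊ : ℝ≥0∞) ≤ 1 := by exact_mod_cast hA
  refine (J.ν_sub_le _ _).trans (add_le_add ?_ ?_)
  · exact (J.ν_mul_left_le A X).trans (mul_le_of_le_one_left' hA')
  · exact (J.ν_mul_right_le X A).trans (mul_le_of_le_one_right' hA')

variable {A : ℕ → H →L[ℂ] H} (hA : ApproxUnit A)
include hA

theorem tendsto_ν_commutator_finRank {F : H →L[ℂ] H} (hF : FinRank F) (hνF : J.ν F ≠ ⊤) :
    Tendsto (fun m => J.ν (A m * F - F * A m)) atTop (𝓝 0) := by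
  have hB : ∀ x, Tendsto (fun m => (A m - 1) x) atTop (𝓝 0) := fun x => by
    simpa using (hA.2.2 x).sub_const x
  have hsum := (J.tendsto_ν_mul_finRank_left hνF hF hB).add
    (J.tendsto_ν_finRank_mul_right hνF hF hB fun m => (hA.isSelfAdjoint m).sub (.one _))
  rw [add_zero] at hsum
  refine tendsto_of_tendsto_of_tendsto_of_le_of_le tendsto_const_nhds hsum (fun _ => zero_le)
    fun m => ?_
  calc J.ν (A m * F - F * A m) = J.ν ((A m - 1) * F - F * (A m - 1)) := by congr 1; noncomm_ring
    _ ≤ _ := J.ν_sub_le _ _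

theorem tendsto_ν_commutator
    (hdense : ∀ X : H →L[ℂ] H, J.ν X ≠ ⊤ → ∀ ε : ℝ≥0∞, 0 < ε →
      ∃ F : H →L[ℂ] H, FinRank F ∧ J.ν (X - F) < ε)
    {X : H →L[ℂ] H} (hX : J.ν X ≠ ⊤) :
    Tendsto (fun m => J.ν (A m * X - X * A m)) atTop (𝓝 0) := by
  rw [ENNReal.tendsto_nhds_zero]
  intro ε hε
  obtain ⟨F, hF, hXF⟩ := hdense X hX (ε / 2 / 2) (by simpa using hε.ne')
  have hνF := J.ν_ne_top_of_sub_ne_top hX hXF.ne_top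
  filter_upwards [ENNReal.tendsto_nhds_zero.1 (J.tendsto_ν_commutator_finRank hA hF hνF) (ε / 2)
    (by simpa using hε.ne')] with m hm
  calc J.ν (A m * X - X * A m)
      = J.ν ((A m * (X - F) - (X - F) * A m) + (A m * F - F * A m)) := by congr 1; noncomm_ring
    _ ≤ J.ν (X - F) + J.ν (X - F) + J.ν (A m * F - F * A m) :=
      (J.ν_add _ _).trans (add_le_add_left (J.ν_commutator_le (hA.nnnorm_le_one m) _) _)
    _ ≤ ε / 2 / 2 + ε / 2 / 2 + ε / 2 := by gcongr
    _ = ε := by rw [ENNReal.add_halves, ENNReal.add_halves]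

end NormedIdeal

theorem ENNReal.tendsto_nhds_of_le_add_of_le_add {ι : Type*} {l : Filter ι} {f f' g : ι → ℝ≥0∞}
    {c : ℝ≥0∞} (hg : Tendsto g l (𝓝 0)) (hf : ∀ i, f i ≤ f' i + g i)
    (hf' : ∀ i, f' i ≤ f i + g i) (hc : Tendsto f' l (𝓝 c)) : Tendsto f l (𝓝 c) := by
  rcases l.eq_or_neBot with rfl | _
  · exact tendsto_bot
  refine tendsto_of_le_liminf_of_limsup_le ?_ ?_
  · calc c = liminf f' l := hc.liminf_eq.symm
      _ ≤ liminf (fun i => f i + g i) l := liminf_le_liminf (.of_forall hf')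
      _ = liminf f l := ENNReal.liminf_add_of_right_tendsto_zero hg f
  · calc limsup f l ≤ limsup (fun i => f' i + g i) l := limsup_le_limsup (.of_forall hf)
      _ = c := by simpa using (hc.add hg).limsup_eq

section CommSup

variable (J : NormedIdeal H) {n : ℕ} (τ τ' : Fin n → H →L[ℂ] H) (A : H →L[ℂ] H)

theorem commSup_le_add_commSup_sub : commSup J τ A ≤ commSup J τ' A + commSup J (τ - τ') A :=
  iSup_le fun j => calc
    J.ν (A * τ j - τ j * A)
        = J.ν ((A * τ' j - τ' j * A) + (A * (τ - τ') j - (τ - τ') j * A)) := by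
      congr 1; simp only [Pi.sub_apply]; noncomm_ring
    _ ≤ _ := (J.ν_add _ _).trans (add_le_add (le_iSup_of_le j le_rfl) (le_iSup_of_le j le_rfl))

theorem commSup_sub_comm : commSup J (τ - τ') A = commSup J (τ' - τ) A := by
  unfold commSup
  congr! 2 with j
  rw [J.ν_sub_comm]
  simp only [Pi.sub_apply]
  noncomm_ring

end CommSup

section Perturbation

variable (J : NormedIdeal H)
  (hdense : ∀ X : H →L[ℂ] H, J.ν X ≠ ⊤ → ∀ ε : ℝ≥0∞, 0 < ε →
    ∃ F : H →L[ℂ] H, FinRank F ∧ J.ν (X - F) < ε)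
  {A : ℕ → H →L[ℂ] H} (hA : ApproxUnit A) {n : ℕ}
include hdense hA

theorem tendsto_commSup_zero {σ : Fin n → H →L[ℂ] H} (hσ : ∀ j, J.ν (σ j) ≠ ⊤) :
    Tendsto (fun m => commSup J σ (A m)) atTop (𝓝 0) := by
  rw [ENNReal.tendsto_nhds_zero]
  intro ε hε
  filter_upwards [eventually_all.2 fun j =>
    ENNReal.tendsto_nhds_zero.1 (J.tendsto_ν_commutator hA hdense (hσ j)) ε hε] with m hm
  exact iSup_le hm

theorem tendsto_commSup_iff {τ τ' : Fin n → H →L[ℂ] H} (h : ∀ j, J.ν (τ j - τ' j) ≠ ⊤)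
    {C : ℝ≥0∞} :
    Tendsto (fun m => commSup J τ (A m)) atTop (𝓝 C) ↔
      Tendsto (fun m => commSup J τ' (A m)) atTop (𝓝 C) := by
  have hg := tendsto_commSup_zero J hdense hA (σ := τ - τ') h
  have hle : ∀ m, commSup J τ (A m) ≤ commSup J τ' (A m) + commSup J (τ - τ') (A m) :=
    fun m => commSup_le_add_commSup_sub J τ τ' (A m)
  have hle' : ∀ m, commSup J τ' (A m) ≤ commSup J τ (A m) + commSup J (τ - τ') (A m) :=
    fun m => commSup_sub_comm J τ τ' (A m) ▸ commSup_le_add_commSup_sub J τ' τ (A m)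
  exact ⟨ENNReal.tendsto_nhds_of_le_add_of_le_add hg hle' hle,
    ENNReal.tendsto_nhds_of_le_add_of_le_add hg hle hle'⟩

end Perturbation

/-- If the finite rank operators are dense in `J` and `τ ≡ τ'` mod `J`, then
`k_J(τ) = k_J(τ')`. -/
theorem qcMod_perturbation_invariant (J : NormedIdeal H)
    (hdense : ∀ X : H →L[ℂ] H, J.ν X ≠ ⊤ → ∀ ε : ℝ≥0∞, 0 < ε →
      ∃ F : H →L[ℂ] H, FinRank F ∧ J.ν (X - F) < ε)
    {n : ℕ} (τ τ' : Fin n → H →L[ℂ] H) (h : ∀ j, J.ν (τ j - τ' j) ≠ ⊤) :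
    qcMod J τ = qcMod J τ' := by
  unfold qcMod
  congr 1
  ext C
  exact exists_congr fun A => and_congr_right fun hA => tendsto_commSup_iff J hdense hA h
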